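/- Let a, b, μ, ν, C, ε, T > 0 and φ : {(t,s) : 0 ≤ s < t ≤ T} → ℝ satisfy 0 ≤ φ(t,s) ≤ C (t-s)^{ε-1}. If φ(t,s) ≤ a (t-s)^{μ-1} + b ∫_s^t (t-τ)^{ν-1} φ(τ,s) dτ for all 0 ≤ s < t ≤ T, then φ(t,s) ≤ a Γ(μ) (t-s)^{μ-1} E_{μ,ν}((b Γ(ν))^{1/ν} (t-s)) for all 0 ≤ s < t ≤ T. -/

import Mathlib

open MeasureTheory Set Real

/-- The two-parameter Mittag-Leffler-type function `E_{μ,ν}(t) = Σ_{n≥0} t^{nν}/Γ(μ+nν)`. -/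
noncomputable def mittagLeffler (μ ν t : ℝ) : ℝ :=
  ∑' n : ℕ, t ^ ((n : ℝ) * ν) / Real.Gamma (μ + (n : ℝ) * ν)

/-!
Translating in `s` reduces the statement to the one-variable inequality
`ψ r ≤ a r^{μ-1} + b ∫₀ʳ (r-ρ)^{ν-1} ψ ρ dρ` for `ψ r = φ (s + r) s`. Its right side is monotone
in `ψ`, so it can be iterated, starting from the a priori bound `ψ r ≤ C r^{ε-1}`. By the Beta
integral, with `c = b Γ(ν)` one iteration sends `c^k r^{β+kν-1}/Γ(β+kν)` to the same expression
with `k + 1`. After `n` iterations the bound is `a Γ(μ) r^{μ-1}` times the `n`-th partial sum of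
`E_{μ,ν}(x)`, `x = c^{1/ν} r`, plus the remainder `C Γ(ε) r^{ε-1} x^{nν}/Γ(ε+nν)`, a term of a
convergent series. The series converge by the ratio test, since log-convexity of `Γ` gives
`Γ(z+ν) ≥ (z-1)^ν Γ(z)`.
-/

open Filter Topology

namespace Real

theorem integral_rpow_mul_one_sub_rpow {p q : ℝ} (hp : 0 < p) (hq : 0 < q) :
    ∫ x in (0 : ℝ)..1, x ^ (p - 1) * (1 - x) ^ (q - 1) = Gamma p * Gamma q / Gamma (p + q) := by
  have hcast : ∀ᵐ x : ℝ ∂volume, x ∈ uIoc (0 : ℝ) 1 →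
      (x : ℂ) ^ ((p : ℂ) - 1) * (1 - (x : ℂ)) ^ ((q : ℂ) - 1) =
        ((x ^ (p - 1) * (1 - x) ^ (q - 1) : ℝ) : ℂ) := by
    refine Eventually.of_forall fun x hx => ?_
    rw [uIoc_of_le zero_le_one] at hx
    rw [Complex.ofReal_mul, Complex.ofReal_cpow hx.1.le, Complex.ofReal_cpow (sub_nonneg.2 hx.2)]
    push_cast
    rfl
  have h := Complex.betaIntegral_eq_Gamma_mul_div p q (by simpa) (by simpa)
  rw [Complex.betaIntegral, intervalIntegral.integral_congr_ae hcast,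
    intervalIntegral.integral_ofReal, ← Complex.ofReal_add, Complex.Gamma_ofReal,
    Complex.Gamma_ofReal, Complex.Gamma_ofReal] at h
  exact_mod_cast h

theorem integral_sub_rpow_mul_rpow {p q r : ℝ} (hp : 0 < p) (hq : 0 < q) (hr : 0 < r) :
    ∫ ρ in (0 : ℝ)..r, (r - ρ) ^ (p - 1) * ρ ^ (q - 1) =
      Gamma p * Gamma q / Gamma (p + q) * r ^ (p + q - 1) := by
  have hscale : ∀ x ∈ uIcc (0 : ℝ) 1, (r - r * x) ^ (p - 1) * (r * x) ^ (q - 1) =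
      r ^ (p + q - 2) * (x ^ (q - 1) * (1 - x) ^ (p - 1)) := by
    intro x hx
    rw [uIcc_of_le zero_le_one] at hx
    rw [← mul_one_sub, mul_rpow hr.le (sub_nonneg.2 hx.2), mul_rpow hr.le hx.1,
      show p + q - 2 = (p - 1) + (q - 1) by ring, rpow_add hr]
    ring
  have h := intervalIntegral.integral_comp_mul_left
    (fun ρ => (r - ρ) ^ (p - 1) * ρ ^ (q - 1)) (a := 0) (b := 1) hr.ne'
  rw [intervalIntegral.integral_congr hscale, intervalIntegral.integral_const_mul,
    integral_rpow_mul_one_sub_rpow hq hp, mul_zero, mul_one, smul_eq_mul, add_comm q p] at h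
  rw [eq_inv_mul_iff_mul_eq₀ hr.ne'] at h
  rw [← h, show p + q - 1 = 1 + (p + q - 2) by ring, rpow_add hr, rpow_one]
  ring

theorem intervalIntegrable_sub_rpow_mul_rpow {p q r : ℝ} (hp : 0 < p) (hq : 0 < q) (hr : 0 < r) :
    IntervalIntegrable (fun ρ => (r - ρ) ^ (p - 1) * ρ ^ (q - 1)) volume 0 r := by
  refine intervalIntegral.intervalIntegrable_of_integral_ne_zero ?_
  rw [integral_sub_rpow_mul_rpow hp hq hr]
  positivity

theorem rpow_sub_one_mul_Gamma_le_Gamma_add {z ν : ℝ} (hz : 1 < z) (hν : 0 < ν) :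
    (z - 1) ^ ν * Gamma z ≤ Gamma (z + ν) := by
  have hz0 : 0 < z - 1 := sub_pos.2 hz
  have hslope := convexOn_log_Gamma.slope_mono_adjacent (x := z - 1) (y := z) (z := z + ν)
    hz0 (by positivity : (0 : ℝ) < z + ν) (by linarith) (by linarith)
  have hrec : Gamma z = (z - 1) * Gamma (z - 1) := by
    simpa using Gamma_add_one hz0.ne'
  have hG : 0 < Gamma (z - 1) := Gamma_pos_of_pos hz0
  simp only [Function.comp_apply, sub_sub_cancel, div_one, add_sub_cancel_left] at hslope
  rw [hrec, log_mul hz0.ne' hG.ne', add_sub_cancel_right, le_div_iff₀ hν] at hslope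
  rw [← log_le_log_iff (by positivity) (Gamma_pos_of_pos (by linarith)), log_mul (by positivity)
    (by positivity), log_rpow hz0, hrec, log_mul hz0.ne' hG.ne']
  linarith

theorem summable_rpow_mul_div_Gamma (μ : ℝ) {ν x : ℝ} (hν : 0 < ν) (hx : 0 ≤ x) :
    Summable fun n : ℕ => x ^ ((n : ℝ) * ν) / Gamma (μ + n * ν) := by
  have hlin : Tendsto (fun n : ℕ => μ + n * ν - 1) atTop atTop := by
    refine (tendsto_atTop_add_const_left _ (μ - 1)
      (tendsto_natCast_atTop_atTop.atTop_mul_const hν)).congr fun n => ?_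
    ring
  refine summable_of_ratio_norm_eventually_le (r := 1 / 2) (by norm_num) ?_
  filter_upwards [hlin.eventually_gt_atTop 0,
    ((tendsto_rpow_atTop hν).comp hlin).eventually_ge_atTop (2 * x ^ ν)] with n hpos hlarge
  have hz : 1 < μ + n * ν := by linarith
  have hΓ := rpow_sub_one_mul_Gamma_le_Gamma_add hz hν
  have hΓpos : 0 < Gamma (μ + n * ν) := Gamma_pos_of_pos (by linarith)
  have hxn : 0 ≤ x ^ ((n : ℝ) * ν) := rpow_nonneg hx _
  simp only [Function.comp_apply] at hlarge
  push_cast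
  rw [add_mul, one_mul, ← add_assoc, rpow_add' hx (by positivity),
    norm_of_nonneg (div_nonneg (by positivity) (Gamma_pos_of_pos (by linarith)).le),
    norm_of_nonneg (div_nonneg hxn hΓpos.le)]
  calc x ^ ((n : ℝ) * ν) * x ^ ν / Gamma (μ + n * ν + ν)
      ≤ x ^ ((n : ℝ) * ν) * x ^ ν / ((μ + n * ν - 1) ^ ν * Gamma (μ + n * ν)) :=
        div_le_div_of_nonneg_left (by positivity) (by positivity) hΓ
    _ ≤ 1 / 2 * (x ^ ((n : ℝ) * ν) / Gamma (μ + n * ν)) := by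
        rw [div_le_iff₀ (by positivity)]
        field_simp
        nlinarith

end Real

noncomputable def henryTerm (c ν β : ℝ) (k : ℕ) (r : ℝ) : ℝ :=
  c ^ k * r ^ (β + k * ν - 1) / Gamma (β + k * ν)

section HenryTerm

variable {ν β r : ℝ}

theorem intervalIntegrable_sub_rpow_mul_henryTerm (c : ℝ) (hν : 0 < ν) (hβ : 0 < β) (k : ℕ)
    (hr : 0 < r) :
    IntervalIntegrable (fun ρ => (r - ρ) ^ (ν - 1) * henryTerm c ν β k ρ) volume 0 r := by
  have hβk : 0 < β + k * ν := by positivity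
  refine ((intervalIntegrable_sub_rpow_mul_rpow hν hβk hr).const_mul
    (c ^ k / Gamma (β + k * ν))).congr_ae (Eventually.of_forall fun ρ => ?_)
  simp only [henryTerm]
  ring

theorem integral_sub_rpow_mul_henryTerm (b : ℝ) (hν : 0 < ν) (hβ : 0 < β) (k : ℕ) (hr : 0 < r) :
    b * ∫ ρ in (0 : ℝ)..r, (r - ρ) ^ (ν - 1) * henryTerm (b * Gamma ν) ν β k ρ =
      henryTerm (b * Gamma ν) ν β (k + 1) r := by
  have hβk : 0 < β + k * ν := by positivity
  have hpull : ∫ ρ in (0 : ℝ)..r, (r - ρ) ^ (ν - 1) * henryTerm (b * Gamma ν) ν β k ρ =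
      (b * Gamma ν) ^ k / Gamma (β + k * ν) *
        ∫ ρ in (0 : ℝ)..r, (r - ρ) ^ (ν - 1) * ρ ^ (β + k * ν - 1) := by
    rw [← intervalIntegral.integral_const_mul]
    congr 1
    funext ρ
    simp only [henryTerm]
    ring
  rw [hpull, integral_sub_rpow_mul_rpow hν hβk hr, henryTerm, Nat.cast_succ,
    show ν + (β + k * ν) = β + (k + 1) * ν by ring]
  field_simp
  ring

theorem intervalIntegrable_sub_rpow_mul_sum_henryTerm (c : ℝ) (hν : 0 < ν) (hβ : 0 < β)
    (s : Finset ℕ) (hr : 0 < r) :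
    IntervalIntegrable (fun ρ => (r - ρ) ^ (ν - 1) * ∑ k ∈ s, henryTerm c ν β k ρ) volume 0 r := by
  have h := IntervalIntegrable.sum s fun k _ =>
    intervalIntegrable_sub_rpow_mul_henryTerm c hν hβ k hr
  simpa only [Finset.sum_fn, Finset.mul_sum] using h

theorem integral_sub_rpow_mul_sum_henryTerm (b : ℝ) (hν : 0 < ν) (hβ : 0 < β) (s : Finset ℕ)
    (hr : 0 < r) :
    b * ∫ ρ in (0 : ℝ)..r, (r - ρ) ^ (ν - 1) * ∑ k ∈ s, henryTerm (b * Gamma ν) ν β k ρ =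
      ∑ k ∈ s, henryTerm (b * Gamma ν) ν β (k + 1) r := by
  simp only [Finset.mul_sum]
  rw [intervalIntegral.integral_finsetSum fun k _ =>
    intervalIntegrable_sub_rpow_mul_henryTerm _ hν hβ k hr, Finset.mul_sum]
  exact Finset.sum_congr rfl fun k _ => integral_sub_rpow_mul_henryTerm b hν hβ k hr

theorem henryTerm_zero (c : ℝ) : henryTerm c ν β 0 r = r ^ (β - 1) / Gamma β := by
  simp [henryTerm]

theorem henryTerm_eq_rpow_mul {c : ℝ} (hc : 0 ≤ c) (hν : ν ≠ 0) (k : ℕ) (hr : 0 < r) :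
    henryTerm c ν β k r = r ^ (β - 1) * ((c ^ (1 / ν) * r) ^ ((k : ℝ) * ν) / Gamma (β + k * ν)) := by
  rw [henryTerm, mul_rpow (rpow_nonneg hc _) hr.le, ← rpow_mul hc,
    show 1 / ν * (k * ν) = k by field_simp, rpow_natCast,
    show β + k * ν - 1 = (β - 1) + k * ν by ring, rpow_add hr]
  ring

end HenryTerm

/-- The `n`-th iterate of the a priori bound `C r^{ε-1}` under
`f ↦ a r^{μ-1} + b ∫₀ʳ (r-ρ)^{ν-1} f ρ dρ`. -/
noncomputable def henryBound (a b μ ν C ε : ℝ) (n : ℕ) (r : ℝ) : ℝ :=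
  a * Gamma μ * ∑ k ∈ Finset.range n, henryTerm (b * Gamma ν) ν μ k r +
    C * Gamma ε * henryTerm (b * Gamma ν) ν ε n r

section HenryBound

variable {a b μ ν C ε r : ℝ}

theorem henryBound_zero (hε : 0 < ε) : henryBound a b μ ν C ε 0 r = C * r ^ (ε - 1) := by
  rw [henryBound, henryTerm_zero]
  field_simp [(Gamma_pos_of_pos hε).ne']
  simp

theorem sub_rpow_mul_henryBound (n : ℕ) (r ρ : ℝ) :
    (r - ρ) ^ (ν - 1) * henryBound a b μ ν C ε n ρ =
      a * Gamma μ * ((r - ρ) ^ (ν - 1) * ∑ k ∈ Finset.range n, henryTerm (b * Gamma ν) ν μ k ρ) +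
        C * Gamma ε * ((r - ρ) ^ (ν - 1) * henryTerm (b * Gamma ν) ν ε n ρ) := by
  rw [henryBound]
  ring

theorem intervalIntegrable_sub_rpow_mul_henryBound (hμ : 0 < μ) (hν : 0 < ν) (hε : 0 < ε)
    (n : ℕ) (hr : 0 < r) :
    IntervalIntegrable (fun ρ => (r - ρ) ^ (ν - 1) * henryBound a b μ ν C ε n ρ) volume 0 r := by
  simp only [sub_rpow_mul_henryBound]
  exact ((intervalIntegrable_sub_rpow_mul_sum_henryTerm _ hν hμ _ hr).const_mul _).add
    ((intervalIntegrable_sub_rpow_mul_henryTerm _ hν hε n hr).const_mul _)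

theorem add_integral_sub_rpow_mul_henryBound (hμ : 0 < μ) (hν : 0 < ν) (hε : 0 < ε)
    (n : ℕ) (hr : 0 < r) :
    a * r ^ (μ - 1) + b * ∫ ρ in (0 : ℝ)..r, (r - ρ) ^ (ν - 1) * henryBound a b μ ν C ε n ρ =
      henryBound a b μ ν C ε (n + 1) r := by
  simp only [sub_rpow_mul_henryBound]
  rw [intervalIntegral.integral_add
    ((intervalIntegrable_sub_rpow_mul_sum_henryTerm _ hν hμ _ hr).const_mul _)
    ((intervalIntegrable_sub_rpow_mul_henryTerm _ hν hε n hr).const_mul _),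
    intervalIntegral.integral_const_mul, intervalIntegral.integral_const_mul, mul_add,
    mul_left_comm b, mul_left_comm b, integral_sub_rpow_mul_sum_henryTerm b hν hμ _ hr,
    integral_sub_rpow_mul_henryTerm b hν hε n hr, henryBound, Finset.sum_range_succ',
    henryTerm_zero]
  field_simp
  ring

theorem le_henryBound {ψ : ℝ → ℝ} {L : ℝ} (hμ : 0 < μ) (hν : 0 < ν) (hε : 0 < ε) (hb : 0 ≤ b)
    (hψ0 : ∀ r, 0 < r → r ≤ L → 0 ≤ ψ r)
    (hψC : ∀ r, 0 < r → r ≤ L → ψ r ≤ C * r ^ (ε - 1))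
    (hψ : ∀ r, 0 < r → r ≤ L →
      ψ r ≤ a * r ^ (μ - 1) + b * ∫ ρ in (0 : ℝ)..r, (r - ρ) ^ (ν - 1) * ψ ρ)
    (n : ℕ) : ∀ r, 0 < r → r ≤ L → ψ r ≤ henryBound a b μ ν C ε n r := by
  induction n with
  | zero =>
    intro r hr hrL
    rw [henryBound_zero hε]
    exact hψC r hr hrL
  | succ n ih =>
    intro r hr hrL
    have hmono : ∫ ρ in (0 : ℝ)..r, (r - ρ) ^ (ν - 1) * ψ ρ ≤
        ∫ ρ in (0 : ℝ)..r, (r - ρ) ^ (ν - 1) * henryBound a b μ ν C ε n ρ := by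
      rw [intervalIntegral.integral_of_le hr.le, intervalIntegral.integral_of_le hr.le]
      refine setIntegral_mono_of_nonneg (fun ρ hρ => ?_) (fun ρ hρ => ?_)
        (intervalIntegrable_sub_rpow_mul_henryBound hμ hν hε n hr).1
      · exact mul_nonneg (rpow_nonneg (sub_nonneg.2 hρ.2) _) (hψ0 ρ hρ.1 (hρ.2.trans hrL))
      · exact mul_le_mul_of_nonneg_left (ih ρ hρ.1 (hρ.2.trans hrL))
          (rpow_nonneg (sub_nonneg.2 hρ.2) _)
    calc ψ r ≤ a * r ^ (μ - 1) + b * ∫ ρ in (0 : ℝ)..r, (r - ρ) ^ (ν - 1) * ψ ρ := hψ r hr hrL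
      _ ≤ a * r ^ (μ - 1) +
          b * ∫ ρ in (0 : ℝ)..r, (r - ρ) ^ (ν - 1) * henryBound a b μ ν C ε n ρ := by gcongr
      _ = henryBound a b μ ν C ε (n + 1) r := add_integral_sub_rpow_mul_henryBound hμ hν hε n hr

theorem tendsto_henryBound (hν : 0 < ν) (hb : 0 ≤ b) (hr : 0 < r) :
    Tendsto (fun n => henryBound a b μ ν C ε n r) atTop
      (𝓝 (a * Gamma μ * r ^ (μ - 1) * mittagLeffler μ ν ((b * Gamma ν) ^ (1 / ν) * r))) := by
  have hc : 0 ≤ b * Gamma ν := mul_nonneg hb (Gamma_pos_of_pos hν).le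
  have hx : 0 ≤ (b * Gamma ν) ^ (1 / ν) * r := by positivity
  have hpartial := (summable_rpow_mul_div_Gamma μ hν hx).hasSum.tendsto_sum_nat
  have hremainder := (summable_rpow_mul_div_Gamma ε hν hx).tendsto_atTop_zero
  simp only [henryBound, henryTerm_eq_rpow_mul hc hν.ne' _ hr, ← Finset.mul_sum]
  convert (hpartial.const_mul (a * Gamma μ * r ^ (μ - 1))).add
    (hremainder.const_mul (C * Gamma ε * r ^ (ε - 1))) using 2
  · ring
  · simp [mittagLeffler]

theorem henry_gronwall {ψ : ℝ → ℝ} {L : ℝ} (hμ : 0 < μ) (hν : 0 < ν) (hε : 0 < ε) (hb : 0 ≤ b)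
    (hψ0 : ∀ r, 0 < r → r ≤ L → 0 ≤ ψ r)
    (hψC : ∀ r, 0 < r → r ≤ L → ψ r ≤ C * r ^ (ε - 1))
    (hψ : ∀ r, 0 < r → r ≤ L →
      ψ r ≤ a * r ^ (μ - 1) + b * ∫ ρ in (0 : ℝ)..r, (r - ρ) ^ (ν - 1) * ψ ρ)
    (r : ℝ) (hr : 0 < r) (hrL : r ≤ L) :
    ψ r ≤ a * Gamma μ * r ^ (μ - 1) * mittagLeffler μ ν ((b * Gamma ν) ^ (1 / ν) * r) :=
  ge_of_tendsto' (tendsto_henryBound hν hb hr) fun n =>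
    le_henryBound hμ hν hε hb hψ0 hψC hψ n r hr hrL

end HenryBound

theorem gronwall_henry_two_var_general (a b μ ν C ε T : ℝ)
    (hb : 0 < b) (hμ : 0 < μ) (hν : 0 < ν) (hε : 0 < ε) (φ : ℝ → ℝ → ℝ)
    (hφ0 : ∀ s t : ℝ, 0 ≤ s → s < t → t ≤ T → 0 ≤ φ t s)
    (hφC : ∀ s t : ℝ, 0 ≤ s → s < t → t ≤ T → φ t s ≤ C * (t - s) ^ (ε - 1))
    (hineq : ∀ s t : ℝ, 0 ≤ s → s < t → t ≤ T →
      φ t s ≤ a * (t - s) ^ (μ - 1) + b * ∫ τ in s..t, (t - τ) ^ (ν - 1) * φ τ s) :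
    ∀ s t : ℝ, 0 ≤ s → s < t → t ≤ T →
      φ t s ≤ a * Real.Gamma μ * (t - s) ^ (μ - 1) *
        mittagLeffler μ ν ((b * Real.Gamma ν) ^ (1 / ν) * (t - s)) := by
  intro s t hs hst htT
  have hshift : ∀ r, ∫ ρ in (0 : ℝ)..r, (r - ρ) ^ (ν - 1) * φ (s + ρ) s =
      ∫ τ in s..s + r, (s + r - τ) ^ (ν - 1) * φ τ s := fun r => by
    simpa using intervalIntegral.integral_comp_add_left
      (fun τ => (s + r - τ) ^ (ν - 1) * φ τ s) s (a := 0) (b := r)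
  have h := henry_gronwall (ψ := fun r => φ (s + r) s) (L := T - s) hμ hν hε hb.le
    (fun r hr hrL => hφ0 s (s + r) hs (by linarith) (by linarith))
    (fun r hr hrL => by simpa using hφC s (s + r) hs (by linarith) (by linarith))
    (fun r hr hrL => by
      simpa [hshift] using hineq s (s + r) hs (by linarith) (by linarith))
    (t - s) (sub_pos.2 hst) (by linarith)
  simpa using h

/-- Two-variable Volterra integral inequality of Gronwall–Henry type:
if `0 ≤ φ(t,s) ≤ C (t-s)^{ε-1}` and
`φ(t,s) ≤ a (t-s)^{μ-1} + b ∫ₛᵗ (t-τ)^{ν-1} φ(τ,s) dτ` for `0 ≤ s < t ≤ T`,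
then `φ(t,s) ≤ a Γ(μ) (t-s)^{μ-1} E_{μ,ν}((bΓ(ν))^{1/ν} (t-s))`. -/
theorem gronwall_henry_two_var (a b μ ν C ε T : ℝ)
    (ha : 0 < a) (hb : 0 < b) (hμ : 0 < μ) (hν : 0 < ν) (hC : 0 < C) (hε : 0 < ε)
    (hT : 0 < T) (φ : ℝ → ℝ → ℝ)
    (hφ0 : ∀ s t : ℝ, 0 ≤ s → s < t → t ≤ T → 0 ≤ φ t s)
    (hφC : ∀ s t : ℝ, 0 ≤ s → s < t → t ≤ T → φ t s ≤ C * (t - s) ^ (ε - 1))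
    (hineq : ∀ s t : ℝ, 0 ≤ s → s < t → t ≤ T →
      φ t s ≤ a * (t - s) ^ (μ - 1) + b * ∫ τ in s..t, (t - τ) ^ (ν - 1) * φ τ s) :
    ∀ s t : ℝ, 0 ≤ s → s < t → t ≤ T →
      φ t s ≤ a * Real.Gamma μ * (t - s) ^ (μ - 1) *
        mittagLeffler μ ν ((b * Real.Gamma ν) ^ (1 / ν) * (t - s)) :=
  gronwall_henry_two_var_general a b μ ν C ε T hb hμ hν hε φ hφ0 hφC hineq
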